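/- Let (X, μ) be a finite measure space, let β > 1 and C ≥ 1 be real numbers, and let ψ : X → [0,∞) be measurable with ‖ψ‖_{L²(μ)} < ∞. Assume that for every real p ≥ 2 one has ‖ψ‖_{L^{pβ}(μ)} ≤ (C p)^{1/p} ‖ψ‖_{L^p(μ)}. Then ψ ∈ L^∞(μ), the series Σ_{k=0}^∞ log(2Cβ^k)/(2β^k) converges, and ‖ψ‖_{L^∞(μ)} ≤ exp( Σ_{k=0}^∞ log(2Cβ^k)/(2β^k) ) · ‖ψ‖_{L²(μ)}. -/

import Mathlib

/-!
Along the exponents `p_k = 2β^k` one has `p_k β = p_{k+1}` and `(C p_k)^{1/p_k} = exp a_k` with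
`a_k = log(2Cβ^k)/(2β^k)`, so iterating the reverse Hölder inequality gives
`‖ψ‖_{p_k} ≤ exp(Σ_{j<k} a_j) ‖ψ‖_2 ≤ M := exp(Σ_j a_j) ‖ψ‖_2`; the series converges since
`a_k = O(k β^{-k})`. A bound on `‖ψ‖_{p_k}` uniform as `p_k → ∞` bounds `‖ψ‖_∞` on a finite measure
space: by Chebyshev `ε μ{|ψ| ≥ ε}^{1/p_k} ≤ M`, and the left side tends to `ε` unless
`μ{|ψ| ≥ ε} = 0`, so that set is null for every `ε > M`.
-/

open MeasureTheory Filter Topology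
open scoped ENNReal

theorem ENNReal.tendsto_rpow_inv_atTop {d : ℝ≥0∞} (h0 : d ≠ 0) (htop : d ≠ ∞) :
    Tendsto (fun p : ℝ => d ^ p⁻¹) atTop (𝓝 1) := by
  have hd : 0 < d.toReal := ENNReal.toReal_pos h0 htop
  have hreal := (Real.continuousAt_const_rpow hd.ne').tendsto.comp tendsto_inv_atTop_zero
  rw [Real.rpow_zero] at hreal
  have hofReal := (ENNReal.continuous_ofReal.tendsto 1).comp hreal
  rw [ENNReal.ofReal_one] at hofReal
  refine hofReal.congr fun p => ?_
  rw [Function.comp_apply, Function.comp_apply, ← ENNReal.ofReal_rpow_of_pos hd,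
    ENNReal.ofReal_toReal htop]

namespace MeasureTheory

variable {α E : Type*} [MeasurableSpace α] {μ : Measure α} [NormedAddCommGroup E] {f : α → E}

theorem mul_meas_ge_rpow_inv_le_eLpNorm (hf : AEStronglyMeasurable f μ) {p : ℝ} (hp : 0 < p)
    (ε : ℝ≥0∞) : ε * μ {x | ε ≤ ‖f x‖ₑ} ^ p⁻¹ ≤ eLpNorm f (ENNReal.ofReal p) μ := by
  have hcheb := mul_meas_ge_le_pow_eLpNorm' μ (by simpa using hp) ENNReal.ofReal_ne_top hf ε
  rw [ENNReal.toReal_ofReal hp.le] at hcheb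
  have hroot := ENNReal.rpow_le_rpow hcheb (inv_nonneg.mpr hp.le)
  rwa [ENNReal.mul_rpow_of_nonneg _ _ (inv_nonneg.mpr hp.le), ← ENNReal.rpow_mul,
    ← ENNReal.rpow_mul, mul_inv_cancel₀ hp.ne', ENNReal.rpow_one, ENNReal.rpow_one] at hroot

theorem eLpNorm_top_le_of_eLpNorm_le [IsFiniteMeasure μ] (hf : AEStronglyMeasurable f μ)
    {ι : Type*} {l : Filter ι} [l.NeBot] {p : ι → ℝ} (hp : Tendsto p l atTop) {M : ℝ≥0∞}
    (hM : ∀ᶠ i in l, eLpNorm f (ENNReal.ofReal (p i)) μ ≤ M) :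
    eLpNorm f ∞ μ ≤ M := by
  rw [eLpNorm_exponent_top]
  refine le_of_forall_gt_imp_ge_of_dense fun ε hMε => essSup_le_of_ae_le ε ?_
  suffices hnull : μ {x | ε ≤ ‖f x‖ₑ} = 0 by
    filter_upwards [measure_eq_zero_iff_ae_notMem.mp hnull] with x hx
    exact (not_le.mp hx).le
  by_contra hd
  have hlim : Tendsto (fun i => ε * μ {x | ε ≤ ‖f x‖ₑ} ^ (p i)⁻¹) l (𝓝 ε) := by
    simpa using ENNReal.Tendsto.const_mul
      ((ENNReal.tendsto_rpow_inv_atTop hd (measure_ne_top μ _)).comp hp) (Or.inl one_ne_zero)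
  refine hMε.not_ge (le_of_tendsto hlim ?_)
  filter_upwards [hM, hp.eventually_gt_atTop 0] with i hi hpi
  exact (mul_meas_ge_rpow_inv_le_eLpNorm hf hpi ε).trans hi

end MeasureTheory

theorem le_prod_range_mul_of_succ_le {M : Type*} [CommMonoid M] [Preorder M] [MulLeftMono M]
    {u c : ℕ → M} (h : ∀ k, u (k + 1) ≤ c k * u k) (k : ℕ) :
    u k ≤ (∏ j ∈ Finset.range k, c j) * u 0 := by
  induction k with
  | zero => simp
  | succ k ih =>
    calc u (k + 1) ≤ c k * u k := h k
      _ ≤ c k * ((∏ j ∈ Finset.range k, c j) * u 0) := mul_le_mul_right ih _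
      _ = (∏ j ∈ Finset.range (k + 1), c j) * u 0 := by
        rw [Finset.prod_range_succ, mul_comm _ (c k), mul_assoc]

theorem ENNReal.le_ofReal_exp_tsum_mul_of_succ_le {u : ℕ → ℝ≥0∞} {a : ℕ → ℝ}
    (h : ∀ k, u (k + 1) ≤ ENNReal.ofReal (Real.exp (a k)) * u k) (ha : ∀ k, 0 ≤ a k)
    (hs : Summable a) (k : ℕ) :
    u k ≤ ENNReal.ofReal (Real.exp (∑' j, a j)) * u 0 := by
  calc u k ≤ (∏ j ∈ Finset.range k, ENNReal.ofReal (Real.exp (a j))) * u 0 :=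
        le_prod_range_mul_of_succ_le h k
    _ = ENNReal.ofReal (Real.exp (∑ j ∈ Finset.range k, a j)) * u 0 := by
        rw [Real.exp_sum, ENNReal.ofReal_prod_of_nonneg fun j _ => (Real.exp_pos _).le]
    _ ≤ ENNReal.ofReal (Real.exp (∑' j, a j)) * u 0 := by
        gcongr
        exact hs.sum_le_tsum _ fun j _ => ha j

theorem summable_log_mul_pow_div_pow {c β : ℝ} (hc : c ≠ 0) (hβ : 1 < β) :
    Summable fun k : ℕ => Real.log (c * β ^ k) / β ^ k := by
  have hr : ‖β⁻¹‖ < 1 := by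
    rw [Real.norm_eq_abs, abs_of_pos (by positivity)]
    exact inv_lt_one_of_one_lt₀ hβ
  have hgeom := (summable_geometric_of_norm_lt_one hr).mul_left (Real.log c)
  have harith := (summable_pow_mul_geometric_of_norm_lt_one 1 hr).mul_left (Real.log β)
  refine (hgeom.add harith).congr fun k => ?_
  rw [Real.log_mul hc (by positivity), Real.log_pow, pow_one, inv_pow]
  field_simp

theorem moser_iteration {X : Type*} [MeasurableSpace X] (μ : Measure X)
    [IsFiniteMeasure μ] (β C : ℝ) (hβ : 1 < β) (hC : 1 ≤ C)
    (ψ : X → ℝ) (hmeas : Measurable ψ)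
    (hL2 : eLpNorm ψ 2 μ < ⊤)
    (hiter : ∀ p : ℝ, 2 ≤ p →
      eLpNorm ψ (ENNReal.ofReal (p * β)) μ ≤
        ENNReal.ofReal ((C * p) ^ (1 / p)) * eLpNorm ψ (ENNReal.ofReal p) μ) :
    MemLp ψ ⊤ μ ∧
    Summable (fun k : ℕ => Real.log (2 * C * β ^ k) / (2 * β ^ k)) ∧
    eLpNorm ψ ⊤ μ ≤
      ENNReal.ofReal (Real.exp (∑' k : ℕ, Real.log (2 * C * β ^ k) / (2 * β ^ k))) *
        eLpNorm ψ 2 μ := by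
  set p : ℕ → ℝ := fun k => 2 * β ^ k
  set a : ℕ → ℝ := fun k => Real.log (2 * C * β ^ k) / (2 * β ^ k)
  have hp2 (k : ℕ) : 2 ≤ p k := le_mul_of_one_le_right zero_le_two (one_le_pow₀ hβ.le)
  have ha (k : ℕ) : 0 ≤ a k :=
    div_nonneg (Real.log_nonneg (by nlinarith [hp2 k])) (by linarith [hp2 k])
  have hsum : Summable a :=
    ((summable_log_mul_pow_div_pow (by positivity) hβ).div_const 2).congr fun k =>
      (div_mul_eq_div_div_swap _ _ _).symm
  have hstep (k : ℕ) : eLpNorm ψ (ENNReal.ofReal (p (k + 1))) μ ≤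
      ENNReal.ofReal (Real.exp (a k)) * eLpNorm ψ (ENNReal.ofReal (p k)) μ := by
    have hpβ : p (k + 1) = p k * β := by simp only [p, pow_succ, mul_assoc]
    have hroot : (C * p k) ^ (1 / p k) = Real.exp (a k) := by
      rw [Real.rpow_def_of_pos (by nlinarith [hp2 k]), mul_one_div, mul_left_comm, ← mul_assoc]
    rw [hpβ, ← hroot]
    exact hiter (p k) (hp2 k)
  have hbound (k : ℕ) : eLpNorm ψ (ENNReal.ofReal (p k)) μ ≤
      ENNReal.ofReal (Real.exp (∑' j, a j)) * eLpNorm ψ 2 μ := by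
    simpa [p] using ENNReal.le_ofReal_exp_tsum_mul_of_succ_le hstep ha hsum k
  have hp : Tendsto p atTop atTop :=
    (tendsto_pow_atTop_atTop_of_one_lt hβ).const_mul_atTop two_pos
  have hess := eLpNorm_top_le_of_eLpNorm_le hmeas.aestronglyMeasurable hp (.of_forall hbound)
  exact ⟨⟨hmeas.aestronglyMeasurable, hess.trans_lt (ENNReal.mul_lt_top ENNReal.ofReal_lt_top hL2)⟩,
    hsum, hess⟩
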